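/- Let γ be a simple terminally weighted rooted tree possessing a branch vertex and satisfying condition (†): every non-terminal direct descendant of the branch vertex of γ has at least two direct descendants. Then every monoidal transform γ̃ ∈ Mon(γ) satisfies: either br(γ̃) = 0 (i.e. γ̃ is a path tree), or br(γ̃) ≥ br(γ) + 1. Moreover, if γ̃ possesses a branch vertex, then γ̃ again satisfies condition (†). -/

import Mathlib

open scoped Classical

noncomputable section

/-- A (pre-)tree: a finite set of natural-number labelled vertices, a root,
a parent function and a weight function.  Well-formedness is the predicate
`IsTree` below. -/
structure PreTree where
  verts : Finset ℕ
  root : ℕ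
  parent : ℕ → ℕ
  wt : ℕ → ℕ

namespace PreTree

/-- `t.Anc u v` means `u ⪯ v` : `u` lies on the (parent-)path from the root to `v`. -/
def Anc (t : PreTree) (u v : ℕ) : Prop := ∃ n : ℕ, t.parent^[n] v = u

/-- strict ancestor `u ≺ v`. -/
def SAnc (t : PreTree) (u v : ℕ) : Prop := t.Anc u v ∧ u ≠ v

/-- `t` is an honest finite rooted tree: the root is a vertex, vertices are closed
under `parent`, the root is a fixed point of `parent`, and every vertex descends
from the root. -/
def IsTree (t : PreTree) : Prop :=
  t.root ∈ t.verts ∧ (∀ v ∈ t.verts, t.parent v ∈ t.verts) ∧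
    t.parent t.root = t.root ∧ ∀ v ∈ t.verts, t.Anc t.root v

/-- The direct descendants (children) of a vertex. -/
def children (t : PreTree) (u : ℕ) : Finset ℕ :=
  t.verts.filter fun x => t.parent x = u ∧ x ≠ u

/-- A vertex is terminal iff it has no (direct) descendants. -/
def Terminal (t : PreTree) (v : ℕ) : Prop := t.children v = ∅

/-- Terminally weighted: a vertex has positive weight iff it is terminal. -/
def TerminallyWeighted (t : PreTree) : Prop :=
  ∀ v ∈ t.verts, (0 < t.wt v ↔ t.children v = ∅)

/-- The total weight of a weighted tree. -/
def totalWeight (t : PreTree) : ℕ := ∑ v ∈ t.verts, t.wt v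

/-- Stable: every ghost non-root vertex has at least three edges attached to it,
i.e. at least two children. -/
def Stable (t : PreTree) : Prop :=
  ∀ v ∈ t.verts, v ≠ t.root → t.wt v = 0 → 2 ≤ (t.children v).card

/-- Semistable: every ghost non-root vertex has at least two edges attached to it,
i.e. at least one child. -/
def Semistable (t : PreTree) : Prop :=
  ∀ v ∈ t.verts, v ≠ t.root → t.wt v = 0 → 1 ≤ (t.children v).card

/-- `b` is the last vertex `v_r` of the trunk: every strict ancestor of `b` has
exactly one child while `b` does not. -/
def IsTrunkEnd (t : PreTree) (b : ℕ) : Prop :=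
  b ∈ t.verts ∧ (t.children b).card ≠ 1 ∧ ∀ p, t.SAnc p b → (t.children p).card = 1

/-- The number of branches: the number of children of the trunk end (`0` for a
path tree).  For an honest tree the trunk end is unique, so the sum below has at
most one nonzero term. -/
def br (t : PreTree) : ℕ :=
  ∑ b ∈ t.verts.filter (fun b => t.IsTrunkEnd b), (t.children b).card

/-- `b` is the branch vertex: the trunk end, provided it has at least two children. -/
def IsBranchVertex (t : PreTree) (b : ℕ) : Prop :=
  t.IsTrunkEnd b ∧ 2 ≤ (t.children b).card

/-- The subtree of `t` rooted at `v` (with the inherited weights). -/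
def subtreeAt (t : PreTree) (v : ℕ) : PreTree where
  verts := t.verts.filter fun u => t.Anc v u
  root := v
  parent := fun u => if u = v then v else t.parent u
  wt := t.wt

/-- Simple: every branch (subtree rooted at a child of the branch vertex) is stable. -/
def Simple (t : PreTree) : Prop :=
  ∀ b, t.IsTrunkEnd b → ∀ c ∈ t.children b, (t.subtreeAt c).Stable

/-- Pruning `t` from `v`: delete all strict descendants of `v` and add their
weights to the weight of `v`. -/
def prune (t : PreTree) (v : ℕ) : PreTree where
  verts := t.verts.filter fun u => ¬ t.SAnc v u
  root := t.root
  parent := t.parent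
  wt := fun u =>
    if u = v then t.wt v + ∑ x ∈ t.verts.filter (fun x => t.SAnc v x), t.wt x
    else t.wt u

/-- Normalization: repeatedly prune from positively weighted non-terminal vertices
until every positive vertex is terminal.  In closed form: keep exactly the vertices
with no positively weighted strict ancestor; a kept ghost vertex keeps weight `0`,
while a kept positive vertex absorbs the weights of all of its descendants. -/
def normalize (t : PreTree) : PreTree where
  verts := t.verts.filter fun u => ∀ p, t.SAnc p u → t.wt p = 0
  root := t.root
  parent := t.parent
  wt := fun u =>
    if t.wt u = 0 then 0 else ∑ x ∈ t.verts.filter (fun x => t.Anc u x), t.wt x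

/-- Collapsing a (non-root) vertex `v`: merge `v` into its direct ascendant (the
merged vertex carries the sum of the two weights, the children of `v` become
children of the merged vertex), then normalize. -/
def collapse (t : PreTree) (v : ℕ) : PreTree :=
  normalize
    { verts := t.verts.erase v
      root := t.root
      parent := fun u => if t.parent u = v then t.parent v else t.parent u
      wt := fun u => if u = t.parent v then t.wt (t.parent v) + t.wt v else t.wt u }

/-- Advancing a (non-root) vertex `v`: every direct descendant `u ≠ v` of the direct
ascendant of `v` is re-attached to `v`, then normalize. -/
def advance (t : PreTree) (v : ℕ) : PreTree :=
  normalize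
    { verts := t.verts
      root := t.root
      parent := fun u =>
        if t.parent u = t.parent v ∧ u ≠ t.parent v ∧ u ≠ v then v else t.parent u
      wt := t.wt }

/-- The monoidal transforms of `t`: the advancings of the direct descendants of the
branch vertex. -/
def Mon (t : PreTree) : Set PreTree :=
  {s | ∃ b v, t.IsBranchVertex b ∧ v ∈ t.children b ∧ s = t.advance v}

/-- Isomorphism of weighted rooted trees. -/
def Iso (s t : PreTree) : Prop :=
  ∃ f : ℕ → ℕ, Set.BijOn f (s.verts : Set ℕ) (t.verts : Set ℕ) ∧ f s.root = t.root ∧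
    (∀ v ∈ s.verts, f (s.parent v) = t.parent (f v)) ∧
    ∀ v ∈ s.verts, t.wt (f v) = s.wt v

/-- `Λ_d`: stable terminally weighted rooted trees of total weight `d`. -/
def Lambda (d : ℕ) : Set PreTree :=
  {t | t.IsTree ∧ t.Stable ∧ t.TerminallyWeighted ∧ t.totalWeight = d}

/-- `Λ_{d,[k]}`, defined inductively: `Λ_{d,[1]} = Λ_d` and for `k ≥ 2`,
`Λ_{d,[k]} = {γ ∈ Λ_{d,[k−1]} : br γ ≥ k+1} ∪ {γ ∈ Mon γ' : γ' ∈ Λ_{d,[k−1]}, br γ' = k}`. -/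
def LambdaK (d : ℕ) : ℕ → Set PreTree
  | 0 => Lambda d
  | 1 => Lambda d
  | k + 2 =>
      {t | t ∈ LambdaK d (k + 1) ∧ k + 3 ≤ t.br} ∪
        {t | ∃ t' ∈ LambdaK d (k + 1), t'.br = k + 2 ∧ t ∈ t'.Mon}

/-- Condition (†): every non-terminal direct descendant of the branch vertex has at
least two direct descendants. -/
def Dagger (t : PreTree) : Prop :=
  ∀ b v, t.IsBranchVertex b → v ∈ t.children b → t.children v ≠ ∅ →
    2 ≤ (t.children v).card

/-- `z_{[b,o]} = ∏_{b ⪰ a ≻ o} z_a`, the product of the variables `z_a` over all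
non-root vertices `a` on the path from the root to `b` (including `a = b`).
The variable `z_a` is `X (Sum.inl a)`; the variable `w_b` is `X (Sum.inr b)`. -/
def zpath (R : Type) [CommRing R] (t : PreTree) (b : ℕ) : MvPolynomial (ℕ ⊕ ℕ) R :=
  ∏ a ∈ t.verts.filter (fun a => t.Anc a b ∧ a ≠ t.root), MvPolynomial.X (Sum.inl a)

/-- `Φ_γ = ∑_{b terminal} z_{[b,o]} · w_b`. -/
def Phi (R : Type) [CommRing R] (t : PreTree) : MvPolynomial (ℕ ⊕ ℕ) R :=
  ∑ b ∈ t.verts.filter (fun b => t.children b = ∅),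
    zpath R t b * MvPolynomial.X (Sum.inr b)

end PreTree

/-! Let `b` be the branch vertex and `v` the advanced child.  If `v` is positive, it is a
leaf and all former siblings of `v` hang below it after regrafting, so normalization prunes
them away: `v` ends the trunk and has no children, giving a path tree.  If `v` is a ghost,
(†) gives it at least two children and no positive vertex of the regrafted tree has
children, so nothing is pruned; `v` becomes the branch vertex, with the children of `v`
together with the `br γ - 1` siblings of `v` as its children.  Those among them that have
children satisfy (†) by the stability of the branch at `v` or by (†) for `γ`. -/

namespace PreTree

variable {t : PreTree} {a b c p u v : ℕ}

lemma mem_children : u ∈ t.children p ↔ u ∈ t.verts ∧ t.parent u = p ∧ u ≠ p :=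
  Finset.mem_filter

lemma anc_refl (t : PreTree) (u : ℕ) : t.Anc u u := ⟨0, rfl⟩

lemma anc_parent (t : PreTree) (u : ℕ) : t.Anc (t.parent u) u := ⟨1, rfl⟩

lemma Anc.trans (h₁ : t.Anc p u) (h₂ : t.Anc u v) : t.Anc p v := by
  obtain ⟨m, rfl⟩ := h₁
  obtain ⟨n, rfl⟩ := h₂
  exact ⟨m + n, Function.iterate_add_apply _ _ _ _⟩

lemma TerminallyWeighted.wt_eq_zero_iff (htw : t.TerminallyWeighted) (hu : u ∈ t.verts) :
    t.wt u = 0 ↔ t.children u ≠ ∅ := by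
  rw [Ne, ← htw u hu, Nat.pos_iff_ne_zero, not_not]

lemma subtreeAt_children_subset (huc : u ≠ c) : (t.subtreeAt c).children u ⊆ t.children u := by
  intro x hx
  obtain ⟨hx, hxu, hxne⟩ := mem_children.mp hx
  have hxu : (if x = c then c else t.parent x) = u := hxu
  have hxc : x ≠ c := by
    rintro rfl
    rw [if_pos rfl] at hxu
    exact huc hxu.symm
  rw [if_neg hxc] at hxu
  exact mem_children.mpr ⟨(Finset.mem_filter.mp hx).1, hxu, hxne⟩

lemma IsTree.iterate_mem (ht : t.IsTree) (hu : u ∈ t.verts) (n : ℕ) :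
    t.parent^[n] u ∈ t.verts := by
  induction n with
  | zero => exact hu
  | succ n ih => rw [Function.iterate_succ_apply']; exact ht.2.1 _ ih

lemma IsTree.mem_of_anc (ht : t.IsTree) (hu : u ∈ t.verts) (hpu : t.Anc p u) :
    p ∈ t.verts := by
  obtain ⟨n, rfl⟩ := hpu
  exact ht.iterate_mem hu n

lemma IsTree.eq_root_of_iterate_eq_self (ht : t.IsTree) (hu : u ∈ t.verts) {n : ℕ}
    (hn : 0 < n) (h : t.parent^[n] u = u) : u = t.root := by
  obtain ⟨N, hN⟩ := ht.2.2.2 u hu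
  have hroot : ∀ k, t.parent^[k] t.root = t.root := Function.iterate_fixed ht.2.2.1
  calc u = t.parent^[n * N] u := (Function.IsPeriodicPt.mul_const h N).symm
    _ = t.parent^[n * N - N] (t.parent^[N] u) := by
      rw [← Function.iterate_add_apply, Nat.sub_add_cancel (Nat.le_mul_of_pos_left N hn)]
    _ = t.root := by rw [hN, hroot]

lemma IsTree.anc_antisymm (ht : t.IsTree) (hv : v ∈ t.verts) (h₁ : t.Anc u v)
    (h₂ : t.Anc v u) : u = v := by
  obtain ⟨m, hm⟩ := h₁
  obtain ⟨n, hn⟩ := h₂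
  rcases Nat.eq_zero_or_pos (n + m) with h | h
  · rw [← hm, show m = 0 by omega, Function.iterate_zero_apply]
  · have hroot := ht.eq_root_of_iterate_eq_self hv h (by rw [Function.iterate_add_apply, hm, hn])
    rw [← hm, hroot, Function.iterate_fixed ht.2.2.1]

lemma IsTree.not_anc_of_mem_children (ht : t.IsTree) (hv : v ∈ t.children b) : ¬ t.Anc v b := by
  obtain ⟨hvm, hpv, hvb⟩ := mem_children.mp hv
  exact fun h => hvb (ht.anc_antisymm hvm (hpv ▸ t.anc_parent v) h).symm

lemma IsTree.exists_child_anc_of_sAnc (ht : t.IsTree) (hu : u ∈ t.verts) (h : t.SAnc p u) :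
    ∃ y ∈ t.children p, t.Anc y u := by
  have hex : ∃ n, t.parent^[n] u = p := h.1
  have hspec : t.parent^[Nat.find hex] u = p := Nat.find_spec hex
  obtain ⟨M, hM⟩ := Nat.exists_eq_succ_of_ne_zero fun (h0 : Nat.find hex = 0) =>
    h.2 (by rw [← hspec, h0]; rfl)
  refine ⟨t.parent^[M] u, mem_children.mpr ⟨ht.iterate_mem hu M, ?_, ?_⟩, M, rfl⟩
  · rw [← Function.iterate_succ_apply' t.parent, ← hM, hspec]
  · exact Nat.find_min hex (by omega)

lemma IsTree.anc_or_anc_of_trunk (ht : t.IsTree) (hb : b ∈ t.verts)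
    (htr : ∀ p, t.SAnc p b → (t.children p).card = 1) (hu : u ∈ t.verts) :
    t.Anc u b ∨ t.Anc b u := by
  obtain ⟨m, hm⟩ := ht.2.2.2 u hu
  induction m generalizing u with
  | zero => rw [show u = t.root from hm]; exact .inl (ht.2.2.2 b hb)
  | succ m ih =>
    by_cases hur : u = t.root
    · exact .inl (hur ▸ ht.2.2.2 b hb)
    have hup : u ≠ t.parent u := fun he => hur (ht.eq_root_of_iterate_eq_self hu one_pos he.symm)
    rcases ih (ht.2.1 u hu) hm with hc | hc
    · by_cases hpb : t.parent u = b
      · exact .inr (hpb ▸ t.anc_parent u)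
      · obtain ⟨y, hy, hyb⟩ := ht.exists_child_anc_of_sAnc hb ⟨hc, hpb⟩
        obtain ⟨z, hz⟩ := Finset.card_eq_one.mp (htr _ ⟨hc, hpb⟩)
        have hu' : u ∈ t.children (t.parent u) := mem_children.mpr ⟨hu, rfl, hup⟩
        rw [hz, Finset.mem_singleton] at hy hu'
        exact .inl (hu' ▸ hy ▸ hyb)
    · exact .inr (hc.trans (t.anc_parent u))

lemma IsTree.isTrunkEnd_unique (ht : t.IsTree) (hb : t.IsTrunkEnd b) (hc : t.IsTrunkEnd c) :
    b = c := by
  by_contra hne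
  rcases ht.anc_or_anc_of_trunk hb.1 hb.2.2 hc.1 with h | h
  · exact hc.2.1 (hb.2.2 _ ⟨h, Ne.symm hne⟩)
  · exact hb.2.1 (hc.2.2 _ ⟨h, hne⟩)

lemma IsTree.br_eq_card (ht : t.IsTree) (hb : t.IsTrunkEnd b) : t.br = (t.children b).card := by
  have hf : t.verts.filter t.IsTrunkEnd = {b} :=
    Finset.eq_singleton_iff_unique_mem.mpr
      ⟨Finset.mem_filter.mpr ⟨hb.1, hb⟩,
        fun x hx => ht.isTrunkEnd_unique (Finset.mem_filter.mp hx).2 hb⟩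
  rw [br, hf, Finset.sum_singleton]

lemma IsTree.wt_eq_zero_of_anc_branchVertex (ht : t.IsTree) (htw : t.TerminallyWeighted)
    (hb : t.IsBranchVertex b) (hpb : t.Anc p b) : t.wt p = 0 := by
  refine (htw.wt_eq_zero_iff (ht.mem_of_anc hb.1.1 hpb)).mpr fun h => ?_
  by_cases hp : p = b
  · exact absurd hb.2 (by simp [← hp, h])
  · exact absurd (hb.1.2.2 p ⟨hpb, hp⟩) (by simp [h])

lemma Simple.two_le_card_children (hs : t.Simple) (htw : t.TerminallyWeighted)
    (hb : t.IsTrunkEnd b) (hc : c ∈ t.children b) (hu : u ∈ t.verts) (hcu : t.SAnc c u)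
    (hne : t.children u ≠ ∅) : 2 ≤ (t.children u).card :=
  (hs b hb c hc u (Finset.mem_filter.mpr ⟨hu, hcu.1⟩) (Ne.symm hcu.2)
    ((htw.wt_eq_zero_iff hu).mpr hne)).trans
    (Finset.card_le_card (subtreeAt_children_subset (Ne.symm hcu.2)))

lemma normalize_children (t : PreTree) (x : ℕ) :
    t.normalize.children x = (t.children x).filter fun u => ∀ p, t.SAnc p u → t.wt p = 0 := by
  ext u
  show u ∈ ((t.verts.filter _).filter _) ↔ u ∈ (t.verts.filter _).filter _
  simp only [Finset.mem_filter]
  tauto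

lemma IsTree.sAnc_trans (ht : t.IsTree) (hv : v ∈ t.verts) (h₁ : t.SAnc p u)
    (h₂ : t.Anc u v) : t.SAnc p v :=
  ⟨h₁.1.trans h₂, fun hpv =>
    h₁.2 (ht.anc_antisymm (ht.mem_of_anc hv h₂) h₁.1 (hpv ▸ h₂))⟩

lemma IsTree.normalize (ht : t.IsTree) : t.normalize.IsTree := by
  refine ⟨Finset.mem_filter.mpr ⟨ht.1, fun p hp => absurd ?_ hp.2⟩, fun u hu => ?_, ht.2.2.1,
    fun u hu => ht.2.2.2 u (Finset.mem_filter.mp hu).1⟩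
  · obtain ⟨n, hn⟩ := hp.1
    rw [← hn]
    exact Function.iterate_fixed ht.2.2.1 n
  · obtain ⟨hu, hkept⟩ := Finset.mem_filter.mp hu
    exact Finset.mem_filter.mpr
      ⟨ht.2.1 u hu, fun p hp => hkept p (ht.sAnc_trans hu hp (t.anc_parent u))⟩

lemma IsTree.mem_normalize_of_anc (ht : t.IsTree) (hu : u ∈ t.normalize.verts)
    (hpu : t.Anc p u) : p ∈ t.normalize.verts := by
  obtain ⟨hu, hkept⟩ := Finset.mem_filter.mp hu
  exact Finset.mem_filter.mpr
    ⟨ht.mem_of_anc hu hpu, fun q hq => hkept q (ht.sAnc_trans hu hq hpu)⟩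

lemma normalize_children_eq_empty (hw : t.wt u ≠ 0) : t.normalize.children u = ∅ := by
  refine Finset.eq_empty_of_forall_notMem fun x hx => ?_
  rw [normalize_children, Finset.mem_filter, mem_children] at hx
  obtain ⟨⟨-, hxu, hne⟩, hkept⟩ := hx
  exact hw (hkept u ⟨hxu ▸ t.anc_parent x, hne.symm⟩)

lemma IsTree.card_normalize_children_eq_one (ht : t.IsTree) (hu : u ∈ t.normalize.verts)
    (hpu : t.SAnc p u) (h₁ : (t.children p).card = 1) : (t.normalize.children p).card = 1 := by
  obtain ⟨y, hy, hyu⟩ := ht.exists_child_anc_of_sAnc (Finset.mem_filter.mp hu).1 hpu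
  obtain ⟨z, hz⟩ := Finset.card_eq_one.mp h₁
  rw [hz, Finset.mem_singleton] at hy
  subst hy
  rw [normalize_children, hz, Finset.filter_singleton,
    if_pos (Finset.mem_filter.mp (ht.mem_normalize_of_anc hu hyu)).2, Finset.card_singleton]

lemma IsTree.normalize_verts_eq (ht : t.IsTree)
    (h : ∀ p ∈ t.verts, t.wt p ≠ 0 → t.children p = ∅) : t.normalize.verts = t.verts := by
  refine Finset.filter_true_of_mem fun u hu p hpu => ?_
  by_contra hw
  obtain ⟨y, hy, -⟩ := ht.exists_child_anc_of_sAnc hu hpu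
  rw [h p (ht.mem_of_anc hu hpu.1) hw] at hy
  exact Finset.notMem_empty y hy

lemma normalize_eq_of_verts_eq (h : t.normalize.verts = t.verts) :
    t.normalize = { t with wt := t.normalize.wt } := by
  have h' : t.verts.filter (fun u => ∀ p, t.SAnc p u → t.wt p = 0) = t.verts := h
  unfold normalize
  rw [h']

lemma br_normalize_of_verts_eq (h : t.normalize.verts = t.verts) : t.normalize.br = t.br := by
  rw [normalize_eq_of_verts_eq h]
  rfl

lemma dagger_normalize_of_verts_eq (h : t.normalize.verts = t.verts) :
    t.normalize.Dagger ↔ t.Dagger := by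
  rw [normalize_eq_of_verts_eq h]
  rfl

def regraft (t : PreTree) (v : ℕ) : PreTree where
  verts := t.verts
  root := t.root
  parent := fun u =>
    if t.parent u = t.parent v ∧ u ≠ t.parent v ∧ u ≠ v then v else t.parent u
  wt := t.wt

lemma advance_eq_normalize_regraft (t : PreTree) (v : ℕ) :
    t.advance v = (t.regraft v).normalize := rfl

lemma regraft_parent (hpv : t.parent v = b) (u : ℕ) :
    (t.regraft v).parent u = if t.parent u = b ∧ u ≠ b ∧ u ≠ v then v else t.parent u := by
  subst hpv
  rfl

lemma regraft_parent_self (hpv : t.parent v = b) : (t.regraft v).parent v = b := by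
  rw [regraft_parent hpv, if_neg fun h => h.2.2 rfl, hpv]

lemma regraft_parent_of_anc (ht : t.IsTree) (hb : b ∈ t.verts) (hpv : t.parent v = b)
    (ha : t.Anc a b) : (t.regraft v).parent a = t.parent a := by
  rw [regraft_parent hpv, if_neg]
  rintro ⟨hab, hne, -⟩
  exact hne (ht.anc_antisymm hb ha (hab ▸ t.anc_parent a))

lemma regraft_iterate_parent (ht : t.IsTree) (hb : b ∈ t.verts) (hpv : t.parent v = b)
    (n : ℕ) : (t.regraft v).parent^[n] b = t.parent^[n] b := by
  induction n with
  | zero => rfl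
  | succ n ih =>
    rw [Function.iterate_succ_apply', Function.iterate_succ_apply', ih,
      regraft_parent_of_anc ht hb hpv ⟨n, rfl⟩]

lemma regraft_anc_iff (ht : t.IsTree) (hb : b ∈ t.verts) (hpv : t.parent v = b) :
    (t.regraft v).Anc p v ↔ p = v ∨ t.Anc p b := by
  constructor
  · rintro ⟨_ | n, rfl⟩
    · exact .inl rfl
    · rw [Function.iterate_succ_apply, regraft_parent_self hpv, regraft_iterate_parent ht hb hpv]
      exact .inr ⟨n, rfl⟩
  · rintro (rfl | ⟨n, rfl⟩)
    · exact (t.regraft p).anc_refl p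
    · refine ⟨n + 1, ?_⟩
      rw [Function.iterate_succ_apply, regraft_parent_self hpv, regraft_iterate_parent ht hb hpv]

lemma IsTree.regraft (ht : t.IsTree) (hb : b ∈ t.verts) (hpv : t.parent v = b)
    (hvm : v ∈ t.verts) : (t.regraft v).IsTree := by
  refine ⟨ht.1, fun u hu => ?_, ?_, fun u hu => ?_⟩
  · rw [regraft_parent hpv]
    split_ifs
    exacts [hvm, ht.2.1 u hu]
  · rw [regraft_parent hpv, if_neg fun h => h.2.1 (ht.2.2.1 ▸ h.1)]
    exact ht.2.2.1
  · obtain ⟨m, hm⟩ := ht.2.2.2 u hu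
    induction m generalizing u with
    | zero => exact ⟨0, hm⟩
    | succ m ih =>
      refine Anc.trans ?_ ((t.regraft v).anc_parent u)
      rw [regraft_parent hpv]
      split_ifs
      · exact (regraft_anc_iff ht hb hpv).mpr (.inr (ht.2.2.2 b hb))
      · exact ih _ (ht.2.1 u hu) (by rwa [Function.iterate_succ_apply] at hm)

lemma regraft_children_self (hpv : t.parent v = b) (hvb : v ≠ b) :
    (t.regraft v).children v = t.children v ∪ (t.children b).erase v := by
  ext u
  simp only [Finset.mem_union, Finset.mem_erase, mem_children, regraft_parent hpv]
  change u ∈ t.verts ∧ _ ↔ _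
  split_ifs <;> grind

lemma regraft_children_parent (hpv : t.parent v = b) (hvb : v ≠ b) (hvm : v ∈ t.verts) :
    (t.regraft v).children b = {v} := by
  ext u
  simp only [Finset.mem_singleton, mem_children, regraft_parent hpv]
  change u ∈ t.verts ∧ _ ↔ _
  split_ifs <;> grind

lemma regraft_children_of_ne (hpv : t.parent v = b) (hp : p ≠ v) (hpb : p ≠ b) :
    (t.regraft v).children p = t.children p := by
  ext u
  simp only [mem_children, regraft_parent hpv]
  change u ∈ t.verts ∧ _ ↔ _
  split_ifs <;> grind

lemma card_regraft_children_of_sAnc (ht : t.IsTree) (hb : t.IsTrunkEnd b)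
    (hv : v ∈ t.children b) (hp : (t.regraft v).SAnc p v) :
    ((t.regraft v).children p).card = 1 := by
  obtain ⟨hvm, hpv, hvb⟩ := mem_children.mp hv
  have hpb : t.Anc p b := ((regraft_anc_iff ht hb.1 hpv).mp hp.1).resolve_left hp.2
  by_cases hpb' : p = b
  · rw [hpb', regraft_children_parent hpv hvb hvm, Finset.card_singleton]
  · rw [regraft_children_of_ne hpv hp.2 hpb']
    exact hb.2.2 p ⟨hpb, hpb'⟩

lemma card_regraft_children_self_add_one (hv : v ∈ t.children b) :
    ((t.regraft v).children v).card + 1 = (t.children v).card + (t.children b).card := by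
  obtain ⟨-, hpv, hvb⟩ := mem_children.mp hv
  have hdisj : Disjoint (t.children v) ((t.children b).erase v) :=
    Finset.disjoint_left.mpr fun u hu hu' =>
      hvb ((mem_children.mp hu).2.1.symm.trans (mem_children.mp (Finset.mem_of_mem_erase hu')).2.1)
  rw [regraft_children_self hpv hvb, Finset.card_union_of_disjoint hdisj, add_assoc,
    Finset.card_erase_add_one hv]

lemma isTrunkEnd_regraft (ht : t.IsTree) (hb : t.IsTrunkEnd b) (hv : v ∈ t.children b)
    (h2 : 2 ≤ (t.children v).card) : (t.regraft v).IsTrunkEnd v := by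
  have hcard := card_regraft_children_self_add_one hv
  have hb₁ := Finset.card_pos.mpr ⟨v, hv⟩
  exact ⟨(mem_children.mp hv).1, by omega,
    fun _ hp => card_regraft_children_of_sAnc ht hb hv hp⟩

lemma dagger_regraft (ht : t.IsTree) (htw : t.TerminallyWeighted) (hs : t.Simple)
    (hd : t.Dagger) (hb : t.IsBranchVertex b) (hv : v ∈ t.children b)
    (h2 : 2 ≤ (t.children v).card) : (t.regraft v).Dagger := by
  obtain ⟨hvm, hpv, hvb⟩ := mem_children.mp hv
  intro b' u hb' hu hne
  rw [(ht.regraft hb.1.1 hpv hvm).isTrunkEnd_unique hb'.1 (isTrunkEnd_regraft ht hb.1 hv h2),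
    regraft_children_self hpv hvb, Finset.mem_union, Finset.mem_erase] at hu
  rcases hu with hu | ⟨huv, hu⟩
  · have hub : u ≠ b := fun h => ht.not_anc_of_mem_children (h ▸ hu) (hpv ▸ t.anc_parent v)
    have huv : u ≠ v := (mem_children.mp hu).2.2
    rw [regraft_children_of_ne hpv huv hub] at hne ⊢
    obtain ⟨hum, hup, -⟩ := mem_children.mp hu
    exact hs.two_le_card_children htw hb.1 hv hum ⟨hup ▸ t.anc_parent u, huv.symm⟩ hne
  · rw [regraft_children_of_ne hpv huv (mem_children.mp hu).2.2] at hne ⊢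
    exact hd b u hb hu hne

lemma normalize_regraft_verts (ht : t.IsTree) (htw : t.TerminallyWeighted)
    (hb : t.IsBranchVertex b) (hv : v ∈ t.children b) (hw : t.wt v = 0) :
    (t.regraft v).normalize.verts = (t.regraft v).verts := by
  obtain ⟨hvm, hpv, -⟩ := mem_children.mp hv
  refine (ht.regraft hb.1.1 hpv hvm).normalize_verts_eq fun p hp hwp => ?_
  have hpb : p ≠ b := by
    rintro rfl
    exact hwp (ht.wt_eq_zero_of_anc_branchVertex htw hb (t.anc_refl p))
  rw [regraft_children_of_ne hpv (fun h => hwp (h ▸ hw)) hpb]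
  exact (htw p hp).mp (Nat.pos_of_ne_zero hwp)

lemma isTrunkEnd_advance_of_wt_ne_zero (ht : t.IsTree) (htw : t.TerminallyWeighted)
    (hb : t.IsBranchVertex b) (hv : v ∈ t.children b) (hw : t.wt v ≠ 0) :
    (t.advance v).IsTrunkEnd v ∧ (t.advance v).children v = ∅ := by
  obtain ⟨hvm, hpv, -⟩ := mem_children.mp hv
  have hempty : (t.advance v).children v = ∅ := normalize_children_eq_empty (t := t.regraft v) hw
  have hvk : v ∈ (t.advance v).verts := Finset.mem_filter.mpr ⟨hvm, fun p hp =>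
    ht.wt_eq_zero_of_anc_branchVertex htw hb
      (((regraft_anc_iff ht hb.1.1 hpv).mp hp.1).resolve_left hp.2)⟩
  refine ⟨⟨hvk, by simp [hempty], fun p hp => ?_⟩, hempty⟩
  exact (ht.regraft hb.1.1 hpv hvm).card_normalize_children_eq_one hvk hp
    (card_regraft_children_of_sAnc ht hb.1 hv hp)

end PreTree

theorem mon_br_increases_general (t : PreTree)
    (ht : t.IsTree) (htw : t.TerminallyWeighted) (hs : t.Simple)
    (hd : t.Dagger) :
    ∀ g ∈ t.Mon,
      (g.br = 0 ∨ t.br + 1 ≤ g.br) ∧ ((∃ b, g.IsBranchVertex b) → g.Dagger) := by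
  rintro _ ⟨b, v, hb, hv, rfl⟩
  obtain ⟨hvm, hpv, -⟩ := PreTree.mem_children.mp hv
  have hgt : (t.advance v).IsTree := (ht.regraft hb.1.1 hpv hvm).normalize
  by_cases hcv : t.children v = ∅
  · obtain ⟨hend, hempty⟩ := PreTree.isTrunkEnd_advance_of_wt_ne_zero ht htw hb hv
      (mt (htw.wt_eq_zero_iff hvm).mp (not_not.mpr hcv))
    refine ⟨.inl (by rw [hgt.br_eq_card hend, hempty, Finset.card_empty]), fun _ b' _ hb' => ?_⟩
    have h2 := hb'.2
    rw [hgt.isTrunkEnd_unique hb'.1 hend, hempty] at h2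
    simp at h2
  · have h2 := hd b v hb hv hcv
    have hverts := PreTree.normalize_regraft_verts ht htw hb hv ((htw.wt_eq_zero_iff hvm).mpr hcv)
    rw [PreTree.advance_eq_normalize_regraft, PreTree.br_normalize_of_verts_eq hverts,
      PreTree.dagger_normalize_of_verts_eq hverts, (ht.regraft hb.1.1 hpv hvm).br_eq_card
        (PreTree.isTrunkEnd_regraft ht hb.1 hv h2), ht.br_eq_card hb.1]
    have := PreTree.card_regraft_children_self_add_one hv
    exact ⟨.inr (by omega), fun _ => PreTree.dagger_regraft ht htw hs hd hb hv h2⟩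

/-- if `γ` is a simple terminally weighted rooted tree with a branch
vertex satisfying condition (†), then every monoidal transform `γ̃ ∈ Mon γ`
satisfies `br γ̃ = 0` or `br γ̃ ≥ br γ + 1`, and if `γ̃` has a branch vertex then
`γ̃` again satisfies (†). -/
theorem mon_br_increases (t : PreTree)
    (ht : t.IsTree) (htw : t.TerminallyWeighted) (hs : t.Simple)
    (hbv : ∃ b, t.IsBranchVertex b) (hd : t.Dagger) :
    ∀ g ∈ t.Mon,
      (g.br = 0 ∨ t.br + 1 ≤ g.br) ∧ ((∃ b, g.IsBranchVertex b) → g.Dagger) :=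
  mon_br_increases_general t ht htw hs hd
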